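/- Suppose a sequence of nonnegative reals (a_k) satisfies a_{k+1} ≤ (C·μ^{2k})^{1/p_k}·a_k for all k ≥ 0, where μ > 1, C ≥ 1, p_k = μ^k·p₀ with p₀ > 0. Then the sequence (a_k) is bounded, and moreover lim sup_k a_k ≤ C^{S₁/p₀}·μ^{2S₂/p₀}·a₀ where S₁ = ∑_{k≥0} μ^{-k} = μ/(μ-1) and S₂ = ∑_{k≥0} k·μ^{-k} = μ/(μ-1)². -/

import Mathlib

/-!
Iterating the recursion gives `a k ≤ (∏_{j<k} (C μ^{2j})^{1/p_j}) a₀`. The product equals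
`C^{∑ μ^{-j}/p₀} μ^{2 ∑ j μ^{-j}/p₀}`, and since `C, μ ≥ 1` it is bounded by the same expression
with the partial sums replaced by the full series `∑ μ^{-j} = μ/(μ-1)` and `∑ j μ^{-j} = μ/(μ-1)²`.
This uniform bound gives both boundedness and the estimate on the `limsup`.
-/

open Finset Filter Real

lemma le_prod_range_mul_of_succ_le_mul {a c : ℕ → ℝ} (hc : ∀ k, 0 ≤ c k)
    (h : ∀ k, a (k + 1) ≤ c k * a k) (k : ℕ) : a k ≤ (∏ j ∈ range k, c j) * a 0 := by
  induction k with
  | zero => simp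
  | succ k ih =>
    calc a (k + 1) ≤ c k * a k := h k
      _ ≤ c k * ((∏ j ∈ range k, c j) * a 0) := mul_le_mul_of_nonneg_left ih (hc k)
      _ = (∏ j ∈ range (k + 1), c j) * a 0 := by rw [prod_range_succ]; ring

section InvPowSums

variable {μ : ℝ} (hμ : 1 < μ)
include hμ

lemma norm_inv_lt_one_of_one_lt : ‖μ⁻¹‖ < 1 := by
  rw [norm_inv, Real.norm_of_nonneg (by linarith)]
  exact inv_lt_one_of_one_lt₀ hμ

lemma sum_range_inv_pow_le (k : ℕ) : ∑ j ∈ range k, μ⁻¹ ^ j ≤ μ / (μ - 1) := by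
  have hsum := hasSum_geometric_of_norm_lt_one (norm_inv_lt_one_of_one_lt hμ)
  have hμ1 : μ - 1 ≠ 0 := by linarith
  calc ∑ j ∈ range k, μ⁻¹ ^ j ≤ (1 - μ⁻¹)⁻¹ :=
        sum_le_hasSum _ (fun j _ => by positivity) hsum
    _ = μ / (μ - 1) := by field_simp

lemma sum_range_mul_inv_pow_le (k : ℕ) :
    ∑ j ∈ range k, (j : ℝ) * μ⁻¹ ^ j ≤ μ / (μ - 1) ^ 2 := by
  have hsum := hasSum_coe_mul_geometric_of_norm_lt_one (norm_inv_lt_one_of_one_lt hμ)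
  have hμ1 : μ - 1 ≠ 0 := by linarith
  calc ∑ j ∈ range k, (j : ℝ) * μ⁻¹ ^ j ≤ μ⁻¹ / (1 - μ⁻¹) ^ 2 :=
        sum_le_hasSum _ (fun j _ => by positivity) hsum
    _ = μ / (μ - 1) ^ 2 := by field_simp

end InvPowSums

lemma rpow_one_div_pow_mul_eq {μ C p₀ : ℝ} (hμ : 0 < μ) (hC : 0 < C) (j : ℕ) :
    (C * μ ^ (2 * j)) ^ (1 / (μ ^ j * p₀)) =
      C ^ (μ⁻¹ ^ j / p₀) * μ ^ (2 * ((j : ℝ) * μ⁻¹ ^ j) / p₀) := by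
  rw [mul_rpow hC.le (by positivity), ← rpow_natCast μ (2 * j), ← rpow_mul hμ.le, inv_pow]
  congr 2 <;> push_cast <;> field_simp

lemma prod_range_moser_factor_le {μ C p₀ : ℝ} (hμ : 1 < μ) (hC : 1 ≤ C) (hp₀ : 0 < p₀) (k : ℕ) :
    ∏ j ∈ range k, (C * μ ^ (2 * j)) ^ (1 / (μ ^ j * p₀)) ≤
      C ^ ((μ / (μ - 1)) / p₀) * μ ^ ((2 * (μ / (μ - 1) ^ 2)) / p₀) := by
  have hμ0 : 0 < μ := by linarith
  simp_rw [rpow_one_div_pow_mul_eq hμ0 (by linarith : 0 < C), prod_mul_distrib,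
    ← rpow_sum_of_pos (by linarith : 0 < C), ← rpow_sum_of_pos hμ0, ← sum_div, ← mul_sum]
  gcongr
  · exact sum_range_inv_pow_le hμ k
  · exact hμ.le
  · exact sum_range_mul_inv_pow_le hμ k

theorem stmt_7 (a : ℕ → ℝ) (ha : ∀ k, 0 ≤ a k) (μ C p₀ : ℝ)
    (hμ : 1 < μ) (hC : 1 ≤ C) (hp₀ : 0 < p₀)
    (p : ℕ → ℝ) (hp : ∀ k, p k = μ ^ k * p₀)
    (hrec : ∀ k : ℕ, a (k + 1) ≤ (C * μ ^ (2 * k)) ^ (1 / p k) * a k) :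
    (∃ M : ℝ, ∀ k, a k ≤ M) ∧
      Filter.limsup a Filter.atTop ≤
        C ^ ((μ / (μ - 1)) / p₀) * μ ^ ((2 * (μ / (μ - 1) ^ 2)) / p₀) * a 0 := by
  have hbound (k : ℕ) :
      a k ≤ C ^ ((μ / (μ - 1)) / p₀) * μ ^ ((2 * (μ / (μ - 1) ^ 2)) / p₀) * a 0 := by
    have hfactor := le_prod_range_mul_of_succ_le_mul (fun j => by positivity) hrec k
    simp only [hp] at hfactor
    exact hfactor.trans
      (mul_le_mul_of_nonneg_right (prod_range_moser_factor_le hμ hC hp₀ k) (ha 0))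
  exact ⟨⟨_, hbound⟩, limsup_le_of_le (isCoboundedUnder_le_of_le atTop ha) (.of_forall hbound)⟩
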